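/- arXiv:1101.3901 — 2 statements merged into one kernel-verified Lean document; each statement's English description precedes it below -/
import Mathlib

section
/- Let X be a separable Fréchet space (or more generally a separable complete metrizable topological vector space) and T : X → X a continuous linear operator. Suppose there exist dense subsets Z, Y ⊆ X and a map S : Y → Y such that (a) for each z ∈ Z, Tⁿ(z) → 0 as n → ∞; (b) for each y ∈ Y, Sⁿ(y) → 0 as n → ∞; (c) T ∘ S = id on Y. Then T is hypercyclic, i.e., there exists x ∈ X whose orbit {x, T(x), T²(x), ...} is dense in X. -/
/-!
Points with a dense orbit under a continuous map `f` form the intersection, over a countable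
basis, of the open sets `⋃ n, f^[n] ⁻¹' B`; by Baire's theorem this intersection is nonempty as
soon as each of these sets is dense, i.e. as soon as `f` is topologically transitive. For `T`,
transitivity between open sets `U ∋ z` and `V ∋ y`, with `z ∈ Z` and `y ∈ Y`, is witnessed by
`x = z + Sⁿ y` for large `n`: then `x → z` while `Tⁿ x = Tⁿ z + y → y`.
-/

open Filter Topology Set TopologicalSpace

theorem Set.LeftInvOn.iterate {α : Type*} {f f' : α → α} {s : Set α} (h : LeftInvOn f' f s)
    (hf : MapsTo f s s) (n : ℕ) : LeftInvOn f'^[n] f^[n] s := by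
  induction n with
  | zero => exact leftInvOn_id s
  | succ n ih =>
    rw [Function.iterate_succ', Function.iterate_succ]
    exact h.comp ih hf

def Function.IsTopologicallyTransitive {X : Type*} [TopologicalSpace X] (f : X → X) : Prop :=
  ∀ U V : Set X, IsOpen U → IsOpen V → U.Nonempty → V.Nonempty → ∃ n, (U ∩ f^[n] ⁻¹' V).Nonempty

theorem Function.IsTopologicallyTransitive.exists_dense_range_iterate {X : Type*}
    [TopologicalSpace X] [BaireSpace X] [SecondCountableTopology X] [Nonempty X] {f : X → X}
    (hf : Continuous f) (htrans : IsTopologicallyTransitive f) :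
    ∃ x, Dense (range fun n ↦ f^[n] x) := by
  have hG : Dense (⋂ B ∈ countableBasis X, ⋃ n, f^[n] ⁻¹' B) := by
    refine dense_biInter_of_isOpen
      (fun B hB ↦ isOpen_iUnion fun n ↦ (isOpen_of_mem_countableBasis hB).preimage (hf.iterate n))
      (countable_countableBasis X) fun B hB ↦ dense_iff_inter_open.2 fun U hU hUne ↦ ?_
    obtain ⟨n, x, hxU, hxB⟩ :=
      htrans U B hU (isOpen_of_mem_countableBasis hB) hUne (nonempty_of_mem_countableBasis hB)
    exact ⟨x, hxU, mem_iUnion.2 ⟨n, hxB⟩⟩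
  obtain ⟨x, hx⟩ := hG.nonempty
  refine ⟨x, (isBasis_countableBasis X).dense_iff.2 fun B hB _ ↦ ?_⟩
  obtain ⟨n, hn⟩ := mem_iUnion.1 (mem_iInter₂.1 hx B hB)
  exact ⟨_, hn, n, rfl⟩

theorem Function.isTopologicallyTransitive_of_tendsto_iterate {X F : Type*} [TopologicalSpace X]
    [AddZeroClass X] [ContinuousAdd X] [FunLike F X X] [AddHomClass F X X] (T : F) {Z Y : Set X}
    (hZ : Dense Z) (hY : Dense Y) {S : X → X} (hSY : MapsTo S Y Y)
    (hTZ : ∀ z ∈ Z, Tendsto (fun n ↦ T^[n] z) atTop (𝓝 0))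
    (hSn : ∀ y ∈ Y, Tendsto (fun n ↦ S^[n] y) atTop (𝓝 0)) (hTS : LeftInvOn T S Y) :
    IsTopologicallyTransitive T := by
  intro U V hU hV hUne hVne
  obtain ⟨z, hzU, hzZ⟩ := hZ.inter_open_nonempty U hU hUne
  obtain ⟨y, hyV, hyY⟩ := hY.inter_open_nonempty V hV hVne
  have hx : Tendsto (fun n ↦ z + S^[n] y) atTop (𝓝 z) := by
    simpa using tendsto_const_nhds.add (hSn y hyY)
  have hTx : Tendsto (fun n ↦ T^[n] (z + S^[n] y)) atTop (𝓝 y) := by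
    have hTnSn : ∀ n, T^[n] (S^[n] y) = y := fun n ↦ hTS.iterate hSY n hyY
    simpa [iterate_map_add, hTnSn] using (hTZ z hzZ).add (tendsto_const_nhds (x := y))
  obtain ⟨n, hnU, hnV⟩ := ((hx.eventually (hU.mem_nhds hzU)).and
    (hTx.eventually (hV.mem_nhds hyV))).exists
  exact ⟨n, _, hnU, hnV⟩

theorem hypercyclicity_criterion_general
    {X : Type*} [UniformSpace X] [AddCommGroup X] [Module ℂ X]
    [IsUniformAddGroup X] [CompleteSpace X]
    [TopologicalSpace.SeparableSpace X] [TopologicalSpace.MetrizableSpace X]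
    (T : X →L[ℂ] X) (Z Y : Set X) (hZ : Dense Z) (hY : Dense Y)
    (S : X → X) (hSY : ∀ y ∈ Y, S y ∈ Y)
    (ha : ∀ z ∈ Z, Tendsto (fun n : ℕ => (T ^ n) z) atTop (𝓝 0))
    (hb : ∀ y ∈ Y, Tendsto (fun n : ℕ => S^[n] y) atTop (𝓝 0))
    (hc : ∀ y ∈ Y, T (S y) = y) :
    ∃ x : X, Dense (Set.range fun n : ℕ => (T ^ n) x) := by
  have : (uniformity X).IsCountablyGenerated := IsUniformAddGroup.uniformity_countably_generated
  simp only [FunLike.coe_pow_eq_iterate] at ha ⊢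
  exact (Function.isTopologicallyTransitive_of_tendsto_iterate T hZ hY hSY ha hb hc
    ).exists_dense_range_iterate T.continuous

/-- Kitai–Gethner–Shapiro hypercyclicity criterion. -/
theorem hypercyclicity_criterion
    {X : Type*} [UniformSpace X] [AddCommGroup X] [Module ℂ X]
    [IsUniformAddGroup X] [ContinuousSMul ℂ X] [CompleteSpace X]
    [TopologicalSpace.SeparableSpace X] [TopologicalSpace.MetrizableSpace X]
    (T : X →L[ℂ] X) (Z Y : Set X) (hZ : Dense Z) (hY : Dense Y)
    (S : X → X) (hSY : ∀ y ∈ Y, S y ∈ Y)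
    (ha : ∀ z ∈ Z, Tendsto (fun n : ℕ => (T ^ n) z) atTop (𝓝 0))
    (hb : ∀ y ∈ Y, Tendsto (fun n : ℕ => S^[n] y) atTop (𝓝 0))
    (hc : ∀ y ∈ Y, T (S y) = y) :
    ∃ x : X, Dense (Set.range fun n : ℕ => (T ^ n) x) :=
  hypercyclicity_criterion_general T Z Y hZ hY S hSY ha hb hc
end

section
/- Let X be a separable Baire topological vector space and L : X → X a continuous linear hypercyclic operator such that every nonzero operator of the form Σᵢ₌₀ᵐ λᵢ Lⁱ (λᵢ ∈ ℂ) has dense range. Then the set of hypercyclic vectors for L is dense-lineable: there exists a dense linear subspace M of X such that every nonzero element of M is a hypercyclic vector for L. Concretely, if f is a hypercyclic vector for L, then M = span{Lⁿ(f) : n ∈ ℕ₀} works. -/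
/-!
A nonzero `g` in the span of the orbit of `f` is `P(L) f` for a nonzero polynomial `P`.
The operator `P(L)` commutes with `L` and has dense range, so it maps the dense orbit of `f`
onto a dense set, which is the orbit of `g`.
-/

open Set in
theorem Submodule.exists_fin_sum_eq_of_mem_span_range {R M : Type*} [Semiring R]
    [AddCommMonoid M] [Module R M] {v : ℕ → M} {x : M} (hx : x ∈ span R (range v)) :
    ∃ (m : ℕ) (c : Fin (m + 1) → R), ∑ i, c i • v i = x := by
  obtain ⟨c, rfl⟩ := Finsupp.mem_span_range_iff_exists_finsupp.mp hx
  refine ⟨c.support.sup id, fun i => c i, ?_⟩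
  rw [Fin.sum_univ_eq_sum_range (fun i => c i • v i),
    Finsupp.sum_of_support_subset c (fun i hi => ?_) (fun i a => a • v i)
      fun i _ => zero_smul R (v i)]
  exact Finset.mem_range_succ_iff.mpr (Finset.le_sup (f := id) hi)

open Set in
theorem ContinuousLinearMap.dense_orbit_apply_of_commute {R M : Type*} [Semiring R]
    [TopologicalSpace M] [AddCommMonoid M] [Module R M] {T L : M →L[R] M}
    (hTL : Commute T L) (hT : DenseRange T) {x : M}
    (hx : Dense (range fun n : ℕ => (L ^ n) x)) :
    Dense (range fun n : ℕ => (L ^ n) (T x)) := by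
  have horbit : (range fun n : ℕ => (L ^ n) (T x)) = T '' range fun n : ℕ => (L ^ n) x := by
    rw [← range_comp]
    exact congrArg range (funext fun n => (DFunLike.congr_fun (hTL.pow_right n).eq x).symm)
  rw [horbit]
  exact hT.dense_image T.continuous hx

theorem hypercyclic_dense_lineable_general
    {X : Type*} [TopologicalSpace X] [AddCommGroup X] [Module ℂ X]
    [IsTopologicalAddGroup X] [ContinuousSMul ℂ X]
    (L : X →L[ℂ] X)
    (hdr : ∀ (m : ℕ) (c : Fin (m + 1) → ℂ), (∃ i, c i ≠ 0) →
      DenseRange (fun x : X => ∑ i : Fin (m + 1), c i • (L ^ (i : ℕ)) x))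
    (f : X) (hf : Dense (Set.range fun n : ℕ => (L ^ n) f)) :
    Dense ((Submodule.span ℂ (Set.range fun n : ℕ => (L ^ n) f) : Submodule ℂ X) : Set X) ∧
    ∀ g ∈ Submodule.span ℂ (Set.range fun n : ℕ => (L ^ n) f), g ≠ 0 →
      Dense (Set.range fun n : ℕ => (L ^ n) g) := by
  refine ⟨hf.mono Submodule.subset_span, fun g hg hg0 => ?_⟩
  obtain ⟨m, c, rfl⟩ := Submodule.exists_fin_sum_eq_of_mem_span_range hg
  set T : X →L[ℂ] X := ∑ i, c i • L ^ (i : ℕ) with hT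
  have hTL : Commute T L :=
    Commute.sum_left _ _ _ fun i _ => ((Commute.refl L).pow_left _).smul_left _
  have hc : ∃ i, c i ≠ 0 := by
    contrapose! hg0
    simp [hg0]
  have hTdense : DenseRange T := by
    convert hdr m c hc using 1
    ext x
    simp [hT]
  have hTf : T f = ∑ i, c i • (L ^ (i : ℕ)) f := by simp [hT]
  rw [← hTf]
  exact T.dense_orbit_apply_of_commute hTL hTdense hf

/-- The hypercyclic vectors of a hypercyclic operator all of whose nonzero polynomials
have dense range are dense-lineable: the span of an orbit of a hypercyclic vector is a
dense subspace all of whose nonzero elements are hypercyclic. -/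
theorem hypercyclic_dense_lineable
    {X : Type*} [TopologicalSpace X] [AddCommGroup X] [Module ℂ X]
    [IsTopologicalAddGroup X] [ContinuousSMul ℂ X]
    [TopologicalSpace.SeparableSpace X] [BaireSpace X]
    (L : X →L[ℂ] X)
    (hdr : ∀ (m : ℕ) (c : Fin (m + 1) → ℂ), (∃ i, c i ≠ 0) →
      DenseRange (fun x : X => ∑ i : Fin (m + 1), c i • (L ^ (i : ℕ)) x))
    (f : X) (hf : Dense (Set.range fun n : ℕ => (L ^ n) f)) :
    Dense ((Submodule.span ℂ (Set.range fun n : ℕ => (L ^ n) f) : Submodule ℂ X) : Set X) ∧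
    ∀ g ∈ Submodule.span ℂ (Set.range fun n : ℕ => (L ^ n) f), g ≠ 0 →
      Dense (Set.range fun n : ℕ => (L ^ n) g) :=
  hypercyclic_dense_lineable_general L hdr f hf
end
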